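/- arXiv:2508.12476 — 2 statements merged into one kernel-verified Lean document; each statement's English description precedes it below -/
import Mathlib

section
/- Let A be the 4th-order 2-dimensional CPS tensor with a_{11 1̄1̄} = a_{22 2̄2̄} = 1, a_{11 2̄2̄} = √−1, a_{22 1̄1̄} = −√−1, all other entries zero. Then f(A)(x) = |x₁|⁴ + i x₁² conj(x₂)² − i x₂² conj(x₁)² + |x₂|⁴ ≥ 0 for every x = (x₁,x₂) ∈ ℂ², i.e. A is Hermitian positive semidefinite, and f(A) vanishes at the nonzero vector (e^{iπ/4}, 1), so A is not Hermitian positive definite. -/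
open Complex Finset

/-- The conjugate polynomial associated to a `2m`-th order `n`-dimensional complex tensor. -/
noncomputable def fpoly {n m : ℕ} (A : (Fin m → Fin n) → (Fin m → Fin n) → ℂ)
    (x : Fin n → ℂ) : ℂ :=
  ∑ i : Fin m → Fin n, ∑ j : Fin m → Fin n,
    A i j * (∏ k, x (i k)) * ∏ k, (starRingEnd ℂ) (x (j k))

/-- Hermitian condition for a `2m`-th order tensor. -/
def IsHermitianTensor {n m : ℕ} (A : (Fin m → Fin n) → (Fin m → Fin n) → ℂ) : Prop :=
  ∀ i j, (starRingEnd ℂ) (A i j) = A j i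

/-- Conjugate partial-symmetric tensor. -/
def IsCPS {n m : ℕ} (A : (Fin m → Fin n) → (Fin m → Fin n) → ℂ) : Prop :=
  IsHermitianTensor A ∧
    ∀ (i j : Fin m → Fin n) (σ τ : Equiv.Perm (Fin m)), A (i ∘ σ) (j ∘ τ) = A i j

/-- `λ` is an `Ĥ`-eigenvalue of the `2(m+1)`-th order tensor `A` with eigenvector `x`. -/
noncomputable def IsHhatEigenpair {n m : ℕ}
    (A : (Fin (m+1) → Fin n) → (Fin (m+1) → Fin n) → ℂ)
    (lam : ℂ) (x : Fin n → ℂ) : Prop :=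
  x ≠ 0 ∧ ∀ p : Fin n,
    (∑ i : Fin m → Fin n, ∑ j : Fin (m+1) → Fin n,
      A (Fin.cons p i) j * (∏ k, x (i k)) * ∏ k, (starRingEnd ℂ) (x (j k)))
    = lam * (starRingEnd ℂ) (x p) * ((‖x p‖ : ℝ) : ℂ) ^ (2*m)

/-- Diagonal entry `a_{p...p p̄...p̄}`. -/
noncomputable def diagEntry {n m : ℕ}
    (A : (Fin m → Fin n) → (Fin m → Fin n) → ℂ) (p : Fin n) : ℂ :=
  A (fun _ => p) (fun _ => p)

/-- `r_p(A)`: sum of moduli of the off-diagonal entries of the `p`-th slice. -/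
noncomputable def rOff {n m : ℕ}
    (A : (Fin (m+1) → Fin n) → (Fin (m+1) → Fin n) → ℂ) (p : Fin n) : ℝ :=
  ∑ i : Fin m → Fin n, ∑ j : Fin (m+1) → Fin n,
    if i = (fun _ => p) ∧ j = (fun _ => p) then 0
    else ‖A (Fin.cons p i) j‖

/-- `r'_p(A)`: sum over tuples in which no index equals `p`. -/
noncomputable def rPrime {n m : ℕ}
    (A : (Fin (m+1) → Fin n) → (Fin (m+1) → Fin n) → ℂ) (p : Fin n) : ℝ :=
  ∑ i : Fin m → Fin n, ∑ j : Fin (m+1) → Fin n,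
    if (∀ k, i k ≠ p) ∧ (∀ k, j k ≠ p) then ‖A (Fin.cons p i) j‖ else 0

/-- `r̂_p(A) = r_p(A) - r'_p(A)`. -/
noncomputable def rHat {n m : ℕ}
    (A : (Fin (m+1) → Fin n) → (Fin (m+1) → Fin n) → ℂ) (p : Fin n) : ℝ :=
  rOff A p - rPrime A p

/-- Entry `a_{p q...q q̄...q̄}`. -/
noncomputable def aSlice {n m : ℕ}
    (A : (Fin (m+1) → Fin n) → (Fin (m+1) → Fin n) → ℂ) (p q : Fin n) : ℂ :=
  A (Fin.cons p (fun _ => q)) (fun _ => q)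

/-- `r_p^q(A) = r_p(A) - |a_{p q...q q̄...q̄}|`. -/
noncomputable def rOffSub {n m : ℕ}
    (A : (Fin (m+1) → Fin n) → (Fin (m+1) → Fin n) → ℂ) (p q : Fin n) : ℝ :=
  rOff A p - ‖aSlice A p q‖

/-- Hermitian positive definiteness. -/
def HermitianPD {n m : ℕ} (A : (Fin m → Fin n) → (Fin m → Fin n) → ℂ) : Prop :=
  ∀ x : Fin n → ℂ, x ≠ 0 → ∃ r : ℝ, fpoly A x = r ∧ 0 < r

/-- Hermitian positive semidefiniteness. -/
def HermitianPSD {n m : ℕ} (A : (Fin m → Fin n) → (Fin m → Fin n) → ℂ) : Prop :=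
  ∀ x : Fin n → ℂ, ∃ r : ℝ, fpoly A x = r ∧ 0 ≤ r

/-- The CPS tensor with a_{111̄1̄} = a_{222̄2̄} = 1, a_{112̄2̄} = i, a_{221̄1̄} = -i, zero otherwise. -/
noncomputable def exampleTensorB : (Fin 2 → Fin 2) → (Fin 2 → Fin 2) → ℂ := fun i j =>
  if i = ![0, 0] ∧ j = ![0, 0] then 1
  else if i = ![1, 1] ∧ j = ![1, 1] then 1
  else if i = ![0, 0] ∧ j = ![1, 1] then Complex.I
  else if i = ![1, 1] ∧ j = ![0, 0] then -Complex.I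
  else 0

/-!
The conjugate polynomial of `exampleTensorB` factors as
`f(A)(x) = (x₁² - i x₂²) · conj (x₁² - i x₂²) = |x₁² - i x₂²|²`,
so it is real and nonnegative, and it vanishes wherever `x₁² = i x₂²`, e.g. at `(e^{iπ/4}, 1)`.
-/

open scoped Real ComplexConjugate

theorem Fintype.sum_fin_two_arrow {α M : Type*} [Fintype α] [AddCommMonoid M]
    (g : (Fin 2 → α) → M) : ∑ i, g i = ∑ a, ∑ b, g ![a, b] := by
  rw [← (finTwoArrowEquiv α).symm.sum_comp, Fintype.sum_prod_type]
  rfl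

theorem HermitianPSD.of_fpoly_eq_normSq {n m : ℕ} {A : (Fin m → Fin n) → (Fin m → Fin n) → ℂ}
    (g : (Fin n → ℂ) → ℂ) (hg : ∀ x, fpoly A x = normSq (g x)) : HermitianPSD A :=
  fun x => ⟨normSq (g x), hg x, normSq_nonneg _⟩

theorem not_hermitianPD_of_fpoly_eq_zero {n m : ℕ} {A : (Fin m → Fin n) → (Fin m → Fin n) → ℂ}
    {x : Fin n → ℂ} (hx : x ≠ 0) (hA : fpoly A x = 0) : ¬ HermitianPD A := by
  intro hPD
  obtain ⟨r, hr, hr_pos⟩ := hPD x hx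
  rw [hA, eq_comm, ofReal_eq_zero] at hr
  exact hr_pos.ne' hr

theorem Complex.exp_pi_div_four_mul_I_sq : exp (π / 4 * I) ^ 2 = I := by
  rw [← exp_nat_mul]
  convert exp_pi_div_two_mul_I using 2
  ring

theorem fpoly_exampleTensorB (x : Fin 2 → ℂ) :
    fpoly exampleTensorB x = normSq (x 0 ^ 2 - I * x 1 ^ 2) := by
  rw [← mul_conj, fpoly]
  simp only [Fintype.sum_fin_two_arrow, Fin.sum_univ_two, Fin.prod_univ_two, exampleTensorB]
  norm_num [funext_iff, Fin.forall_fin_two]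
  linear_combination (conj (x 1) ^ 2 * x 1 ^ 2) * I_sq

theorem exampleTensorB_psd_not_pd :
    HermitianPSD exampleTensorB ∧
    (![Complex.exp ((Real.pi / 4 : ℂ) * Complex.I), 1] : Fin 2 → ℂ) ≠ 0 ∧
    fpoly exampleTensorB ![Complex.exp ((Real.pi / 4 : ℂ) * Complex.I), 1] = 0 ∧
    ¬ HermitianPD exampleTensorB := by
  have hx : (![exp (π / 4 * I), 1] : Fin 2 → ℂ) ≠ 0 := fun h => by
    simpa using congrFun h 1
  have hzero : fpoly exampleTensorB ![exp (π / 4 * I), 1] = 0 := by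
    simp [fpoly_exampleTensorB, exp_pi_div_four_mul_I_sq]
  exact ⟨.of_fpoly_eq_normSq _ fpoly_exampleTensorB, hx, hzero,
    not_hermitianPD_of_fpoly_eq_zero hx hzero⟩
end

section
/- Let A be a 2m-th order n-dimensional CPS tensor. If all Ĥ-eigenvalues of A are nonnegative, then A is Hermitian positive semidefinite. (Key analytic step: the minimum of f(A) on the compact set B = {x ∈ ℂⁿ : Σ|x_i|^{2m} = 1} is attained at some v, and by Lagrange multipliers v is an Ĥ-eigenvector of A with Ĥ-eigenvalue λ = f(A)(v); hence f(A)(v) = λ ≥ 0, and homogeneity f(A)(tx) = t^{2m} f(A)(x) for t ∈ ℝ gives f(A)(x) ≥ 0 for all x.) -/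
open Complex Finset

/-!
`Re f(A)` is continuous, so it attains its minimum `λ` on the compact set
`B = {x | Σ |x_q|^(2(m+1)) = 1}` at some `v`. By homogeneity of degree `2(m+1)`,
`λ · Σ |y_q|^(2(m+1)) ≤ Re f(A)(y)` for every `y`, with equality at `v`, so `v` is an
unconstrained minimiser of `Re f(A) - λ Σ |x_q|^(2(m+1))`. Its directional derivatives vanish, and
by the Hermitian and partial symmetry of `A` this is exactly the `Ĥ`-eigen-equation for `(λ, v)`.
Hence `λ ≥ 0`, and then `Re f(A)(y) ≥ λ Σ |y_q|^(2(m+1)) ≥ 0`.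
-/

open ComplexConjugate

theorem Fin.prod_univ_erase {M : Type*} [CommMonoid M] {N : ℕ} (f : Fin (N + 1) → M)
    (k : Fin (N + 1)) : ∏ l ∈ univ.erase k, f l = ∏ l, f (k.succAbove l) := by
  rw [Fin.univ_succAbove N k, Finset.erase_cons, Finset.prod_map, Fin.coe_succAboveEmb]

/-- Moving position `k` to the front with `Fin.cycleRange` shows that every `k` contributes the
same sum. -/
theorem sum_mul_sum_mul_prod_erase_of_perm_invariant {R : Type*} [CommSemiring R] {N n : ℕ}
    (B : (Fin (N + 1) → Fin n) → R) (hB : ∀ i (σ : Equiv.Perm (Fin (N + 1))), B (i ∘ σ) = B i)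
    (v d : Fin n → R) :
    ∑ i, B i * ∑ k, d (i k) * ∏ l ∈ univ.erase k, v (i l)
      = (N + 1) * ∑ q, d q * ∑ i : Fin N → Fin n, B (Fin.cons q i) * ∏ l, v (i l) := by
  have hk (k : Fin (N + 1)) : ∑ i, B i * (d (i k) * ∏ l ∈ univ.erase k, v (i l))
      = ∑ q, d q * ∑ i : Fin N → Fin n, B (Fin.cons q i) * ∏ l, v (i l) := by
    rw [← (Fin.insertNthEquiv (fun _ => Fin n) k).sum_comp, Fintype.sum_prod_type]
    refine sum_congr rfl fun q _ => ?_
    rw [mul_sum]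
    refine sum_congr rfl fun i _ => ?_
    have hBk : B (k.insertNth q i) = B (Fin.cons q i) := by
      rw [← Fin.cons_comp_cycleRange, hB]
    simp only [Fin.insertNthEquiv, Equiv.coe_fn_mk, Fin.insertNth_apply_same, Fin.prod_univ_erase,
      Fin.insertNth_apply_succAbove, hBk]
    ring
  calc ∑ i, B i * ∑ k, d (i k) * ∏ l ∈ univ.erase k, v (i l)
      = ∑ k, ∑ i, B i * (d (i k) * ∏ l ∈ univ.erase k, v (i l)) := by
        simp only [mul_sum]; exact sum_comm
    _ = (N + 1) * ∑ q, d q * ∑ i : Fin N → Fin n, B (Fin.cons q i) * ∏ l, v (i l) := by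
        simp only [hk, sum_const, card_univ, Fintype.card_fin, nsmul_eq_mul, Nat.cast_succ]

section NormPowSum

variable {ι : Type*} [Fintype ι]

noncomputable def normPowSum (k : ℕ) (x : ι → ℂ) : ℝ := ∑ q, ‖x q‖ ^ k

theorem normPowSum_nonneg (k : ℕ) (x : ι → ℂ) : 0 ≤ normPowSum k x :=
  sum_nonneg fun _ _ => by positivity

theorem normPowSum_real_smul (k : ℕ) (t : ℝ) (x : ι → ℂ) :
    normPowSum k (t • x) = |t| ^ k * normPowSum k x := by
  simp only [normPowSum, mul_sum, Pi.smul_apply, Complex.real_smul, norm_mul, Complex.norm_real,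
    Real.norm_eq_abs, mul_pow]

theorem eq_zero_of_normPowSum_eq_zero {k : ℕ} (hk : k ≠ 0) {x : ι → ℂ}
    (h : normPowSum k x = 0) : x = 0 := by
  funext q
  have hq := (sum_eq_zero_iff_of_nonneg fun q _ => by positivity).mp h q (mem_univ q)
  simpa [hk] using hq

theorem continuous_normPowSum (k : ℕ) : Continuous (normPowSum k : (ι → ℂ) → ℝ) :=
  continuous_finsetSum _ fun q _ => ((continuous_apply q).norm).pow k

theorem isCompact_normPowSum_eq_one {k : ℕ} (hk : k ≠ 0) :
    IsCompact {x : ι → ℂ | normPowSum k x = 1} := by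
  refine Metric.isCompact_of_isClosed_isBounded
    (isClosed_eq (continuous_normPowSum k) continuous_const) ?_
  refine (Metric.isBounded_closedBall (x := 0) (r := 1)).subset fun x hx => ?_
  rw [Metric.mem_closedBall, dist_zero_right, pi_norm_le_iff_of_nonneg zero_le_one]
  intro q
  have hq : ‖x q‖ ^ k ≤ 1 :=
    (single_le_sum (fun q _ => by positivity) (mem_univ q)).trans_eq (hx : normPowSum k x = 1)
  exact (pow_le_one_iff_of_nonneg (norm_nonneg _) hk).mp hq

theorem exists_pos_normPowSum_smul_eq_one {k : ℕ} (hk : k ≠ 0) {x : ι → ℂ}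
    (hx : normPowSum k x ≠ 0) : ∃ t : ℝ, 0 < t ∧ normPowSum k (t • x) = 1 := by
  have hpos := (normPowSum_nonneg k x).lt_of_ne' hx
  refine ⟨(normPowSum k x)⁻¹ ^ ((k : ℝ)⁻¹), by positivity, ?_⟩
  rw [normPowSum_real_smul, abs_of_pos (by positivity),
    Real.rpow_inv_natCast_pow (by positivity) hk, inv_mul_cancel₀ hx]

theorem hasDerivAt_normPowSum_add_smul (m : ℕ) (v d : ι → ℂ) :
    HasDerivAt (fun t : ℝ => normPowSum (2 * (m + 1)) (v + t • d))
      (2 * (m + 1) * (∑ q, d q * (conj (v q) * ‖v q‖ ^ (2 * m))).re) 0 := by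
  have hcoord (q : ι) : HasDerivAt (fun t : ℝ => (v + t • d) q) (d q) 0 := by
    simpa using ((hasDerivAt_id (0 : ℝ)).smul_const (d q)).const_add (v q)
  have hterm (q : ι) := ((hcoord q).norm_sq).fun_pow (m + 1)
  simp only [← pow_mul] at hterm
  refine (HasDerivAt.fun_sum fun q (_ : q ∈ univ) => hterm q).congr_deriv ?_
  simp only [zero_smul, add_zero, Complex.inner, Complex.re_sum, mul_sum]
  refine sum_congr rfl fun q _ => ?_
  rw [← Complex.ofReal_pow, ← mul_assoc (d q), Complex.re_mul_ofReal, Nat.add_sub_cancel]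
  push_cast
  ring

end NormPowSum

section Tensor

variable {n m M : ℕ}

noncomputable def sesqForm (A : (Fin M → Fin n) → (Fin M → Fin n) → ℂ)
    (P Q : (Fin M → Fin n) → ℂ) : ℂ :=
  ∑ i, ∑ j, A i j * P i * conj (Q j)

def monomial (x : Fin n → ℂ) (i : Fin M → Fin n) : ℂ := ∏ k, x (i k)

theorem fpoly_eq_sesqForm (A : (Fin M → Fin n) → (Fin M → Fin n) → ℂ) (x : Fin n → ℂ) :
    fpoly A x = sesqForm A (monomial x) (monomial x) := by
  simp only [fpoly, sesqForm, monomial, map_prod]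

theorem IsHermitianTensor.conj_sesqForm {A : (Fin M → Fin n) → (Fin M → Fin n) → ℂ}
    (hA : IsHermitianTensor A) (P Q : (Fin M → Fin n) → ℂ) :
    conj (sesqForm A P Q) = sesqForm A Q P := by
  simp only [sesqForm, map_sum, map_mul, Complex.conj_conj]
  rw [sum_comm]
  exact sum_congr rfl fun i _ => sum_congr rfl fun j _ => by rw [hA]; ring

theorem IsHermitianTensor.conj_fpoly {A : (Fin M → Fin n) → (Fin M → Fin n) → ℂ}
    (hA : IsHermitianTensor A) (x : Fin n → ℂ) : conj (fpoly A x) = fpoly A x := by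
  rw [fpoly_eq_sesqForm, hA.conj_sesqForm]

theorem fpoly_real_smul (A : (Fin M → Fin n) → (Fin M → Fin n) → ℂ) (t : ℝ)
    (x : Fin n → ℂ) : fpoly A (t • x) = (t : ℂ) ^ (2 * M) * fpoly A x := by
  simp only [fpoly, mul_sum, Pi.smul_apply, Complex.real_smul, map_mul, Complex.conj_ofReal,
    prod_mul_distrib, prod_const, card_univ, Fintype.card_fin, two_mul, pow_add]
  exact sum_congr rfl fun i _ => sum_congr rfl fun j _ => by ring

theorem continuous_fpoly (A : (Fin M → Fin n) → (Fin M → Fin n) → ℂ) :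
    Continuous (fpoly A) := by
  unfold fpoly
  fun_prop

theorem fpoly_zero (A : (Fin (m + 1) → Fin n) → (Fin (m + 1) → Fin n) → ℂ) :
    fpoly A 0 = 0 := by
  simpa using fpoly_real_smul A 0 0

theorem hasDerivAt_sesqForm (A : (Fin M → Fin n) → (Fin M → Fin n) → ℂ)
    {P Q : ℝ → (Fin M → Fin n) → ℂ} {P' Q' : (Fin M → Fin n) → ℂ} {t : ℝ}
    (hP : ∀ i, HasDerivAt (P · i) (P' i) t) (hQ : ∀ j, HasDerivAt (Q · j) (Q' j) t) :
    HasDerivAt (fun s => sesqForm A (P s) (Q s))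
      (sesqForm A P' (Q t) + sesqForm A (P t) Q') t := by
  unfold sesqForm
  simp only [← sum_add_distrib]
  refine HasDerivAt.fun_sum fun i _ => HasDerivAt.fun_sum fun j _ => ?_
  have h := ((hP i).const_mul (A i j)).fun_mul (hQ j).star
  simp only [Complex.star_def] at h
  exact h

theorem hasDerivAt_monomial_add_smul (v d : Fin n → ℂ) (i : Fin M → Fin n) :
    HasDerivAt (fun t : ℝ => monomial (v + t • d) i)
      (∑ k, d (i k) * ∏ l ∈ univ.erase k, v (i l)) 0 := by
  have hcoord (k : Fin M) : HasDerivAt (fun t : ℝ => (v + t • d) (i k)) (d (i k)) 0 := by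
    simpa using ((hasDerivAt_id (0 : ℝ)).smul_const (d (i k))).const_add (v (i k))
  refine (HasDerivAt.fun_finsetProd fun k (_ : k ∈ univ) => hcoord k).congr_deriv ?_
  simp [mul_comm]

theorem IsHermitianTensor.hasDerivAt_re_fpoly_add_smul
    {A : (Fin M → Fin n) → (Fin M → Fin n) → ℂ} (hA : IsHermitianTensor A) (v d : Fin n → ℂ) :
    HasDerivAt (fun t : ℝ => (fpoly A (v + t • d)).re)
      (2 * (sesqForm A (fun i => ∑ k, d (i k) * ∏ l ∈ univ.erase k, v (i l)) (monomial v)).re)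
      0 := by
  set D := fun i : Fin M → Fin n => ∑ k, d (i k) * ∏ l ∈ univ.erase k, v (i l)
  have h := hasDerivAt_sesqForm A (hasDerivAt_monomial_add_smul v d)
    (hasDerivAt_monomial_add_smul v d)
  simp only [zero_smul, add_zero] at h
  rw [← hA.conj_sesqForm D, Complex.add_conj] at h
  simpa only [fpoly_eq_sesqForm, Function.comp_def, Complex.reCLM_apply, Complex.ofReal_re] using
    Complex.reCLM.hasFDerivAt.comp_hasDerivAt (0 : ℝ) h

/-- The `p`-th entry of `A x^m x̄^(m+1)`, the left side of the `Ĥ`-eigen-equation. -/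
noncomputable def contractSlice (A : (Fin (m + 1) → Fin n) → (Fin (m + 1) → Fin n) → ℂ)
    (x : Fin n → ℂ) (p : Fin n) : ℂ :=
  ∑ i : Fin m → Fin n, ∑ j, A (Fin.cons p i) j * (∏ k, x (i k)) * ∏ k, conj (x (j k))

theorem sesqForm_sum_mul_prod_erase {A : (Fin (m + 1) → Fin n) → (Fin (m + 1) → Fin n) → ℂ}
    (hA : ∀ i j (σ : Equiv.Perm (Fin (m + 1))), A (i ∘ σ) j = A i j) (v d : Fin n → ℂ) :
    sesqForm A (fun i => ∑ k, d (i k) * ∏ l ∈ univ.erase k, v (i l)) (monomial v)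
      = (m + 1) * ∑ q, d q * contractSlice A v q := by
  set B := fun i => ∑ j, A i j * conj (monomial v j)
  calc sesqForm A (fun i => ∑ k, d (i k) * ∏ l ∈ univ.erase k, v (i l)) (monomial v)
      = ∑ i, B i * ∑ k, d (i k) * ∏ l ∈ univ.erase k, v (i l) := by
        simp only [sesqForm, B, sum_mul]
        exact sum_congr rfl fun i _ => sum_congr rfl fun j _ => by ring
    _ = (m + 1) * ∑ q, d q * contractSlice A v q := by
        rw [sum_mul_sum_mul_prod_erase_of_perm_invariant B (fun i σ => by simp only [B, hA])]
        simp only [B, contractSlice, monomial, map_prod, sum_mul]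
        exact congrArg _ <| sum_congr rfl fun q _ => congrArg _ <|
          sum_congr rfl fun i _ => sum_congr rfl fun j _ => by ring

theorem IsCPS.hasDerivAt_re_fpoly_add_smul
    {A : (Fin (m + 1) → Fin n) → (Fin (m + 1) → Fin n) → ℂ} (hA : IsCPS A) (v d : Fin n → ℂ) :
    HasDerivAt (fun t : ℝ => (fpoly A (v + t • d)).re)
      (2 * (m + 1) * (∑ q, d q * contractSlice A v q).re) 0 := by
  have hsym : ∀ i j (σ : Equiv.Perm (Fin (m + 1))), A (i ∘ σ) j = A i j :=
    fun i j σ => hA.2 i j σ 1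
  convert hA.1.hasDerivAt_re_fpoly_add_smul v d using 1
  rw [sesqForm_sum_mul_prod_erase hsym, show (m + 1 : ℂ) = ((m + 1 : ℝ) : ℂ) by push_cast; rfl,
    Complex.re_ofReal_mul]
  ring

theorem mul_normPowSum_le_re_fpoly_of_isMinOn
    {A : (Fin (m + 1) → Fin n) → (Fin (m + 1) → Fin n) → ℂ} {v : Fin n → ℂ}
    (hmin : IsMinOn (fun x => (fpoly A x).re) {x | normPowSum (2 * (m + 1)) x = 1} v)
    (y : Fin n → ℂ) : (fpoly A v).re * normPowSum (2 * (m + 1)) y ≤ (fpoly A y).re := by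
  by_cases hy : normPowSum (2 * (m + 1)) y = 0
  · rw [hy, eq_zero_of_normPowSum_eq_zero (by omega) hy, fpoly_zero]
    simp
  obtain ⟨t, ht, hty⟩ := exists_pos_normPowSum_smul_eq_one (by omega) hy
  have hv : (fpoly A v).re ≤ t ^ (2 * (m + 1)) * (fpoly A y).re := by
    simpa [fpoly_real_smul, ← Complex.ofReal_pow] using hmin hty
  rw [normPowSum_real_smul, abs_of_pos ht] at hty
  calc (fpoly A v).re * normPowSum (2 * (m + 1)) y
      ≤ t ^ (2 * (m + 1)) * (fpoly A y).re * normPowSum (2 * (m + 1)) y :=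
        mul_le_mul_of_nonneg_right hv (normPowSum_nonneg _ y)
    _ = (fpoly A y).re := by rw [mul_right_comm, hty, one_mul]

/-- Lagrange condition: the derivative at `v` of `Re f(A) - λ Σ |x_q|^(2(m+1))` in the direction
`conj w`, where `w` is the residual of the eigen-equation, is `2(m+1) Σ |w_q|²`, and it vanishes. -/
theorem IsCPS.contractSlice_eq_of_forall_mul_normPowSum_le
    {A : (Fin (m + 1) → Fin n) → (Fin (m + 1) → Fin n) → ℂ} (hA : IsCPS A) {lam : ℝ}
    {v : Fin n → ℂ} (hle : ∀ y, lam * normPowSum (2 * (m + 1)) y ≤ (fpoly A y).re)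
    (hv : (fpoly A v).re = lam * normPowSum (2 * (m + 1)) v) (p : Fin n) :
    contractSlice A v p = lam * conj (v p) * ((‖v p‖ : ℝ) : ℂ) ^ (2 * m) := by
  set w : Fin n → ℂ := fun q => contractSlice A v q - lam * (conj (v q) * ‖v q‖ ^ (2 * m))
  set d : Fin n → ℂ := fun q => conj (w q)
  have hderiv := (hA.hasDerivAt_re_fpoly_add_smul v d).sub
    ((hasDerivAt_normPowSum_add_smul m v d).const_mul lam)
  have hmin : IsLocalMin (fun t : ℝ =>
      (fpoly A (v + t • d)).re - lam * normPowSum (2 * (m + 1)) (v + t • d)) 0 :=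
    Filter.Eventually.of_forall fun t => by
      simp only [zero_smul, add_zero, hv, sub_self, sub_nonneg]
      exact hle _
  have hw : (∑ q, d q * w q).re = ∑ q, ‖w q‖ ^ 2 := by
    simp only [d, Complex.conj_mul', Complex.re_sum, ← Complex.ofReal_pow, Complex.ofReal_re]
  have hsum : ∑ q, ‖w q‖ ^ 2 = 0 := by
    have h0 := hmin.hasDerivAt_eq_zero hderiv
    simp only [w, mul_sub, sum_sub_distrib, Complex.sub_re, mul_left_comm (d _) (lam : ℂ),
      ← mul_sum, Complex.re_ofReal_mul] at hw
    nlinarith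
  have hwp := (sum_eq_zero_iff_of_nonneg fun q _ => by positivity).mp hsum p (mem_univ p)
  rw [mul_assoc]
  exact sub_eq_zero.mp (by simpa using hwp)

end Tensor

theorem cps_psd_of_nonneg_hhat_eigenvalues {n m : ℕ}
    (A : (Fin (m+1) → Fin n) → (Fin (m+1) → Fin n) → ℂ)
    (hcps : IsCPS A)
    (h : ∀ (lam : ℂ) (x : Fin n → ℂ), IsHhatEigenpair A lam x → 0 ≤ lam.re ∧ lam.im = 0) :
    HermitianPSD A := by
  intro x
  refine ⟨(fpoly A x).re, (Complex.conj_eq_iff_re.mp (hcps.1.conj_fpoly x)).symm, ?_⟩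
  have hk : 2 * (m + 1) ≠ 0 := by omega
  by_cases hx : normPowSum (2 * (m + 1)) x = 0
  · simp [eq_zero_of_normPowSum_eq_zero hk hx, fpoly_zero]
  obtain ⟨t, -, htx⟩ := exists_pos_normPowSum_smul_eq_one hk hx
  obtain ⟨v, hv, hmin⟩ := (isCompact_normPowSum_eq_one hk).exists_isMinOn ⟨_, htx⟩
    (Complex.continuous_re.comp (continuous_fpoly A)).continuousOn
  have hbound := mul_normPowSum_le_re_fpoly_of_isMinOn hmin
  have heig : IsHhatEigenpair A (fpoly A v).re v := by
    refine ⟨?_, hcps.contractSlice_eq_of_forall_mul_normPowSum_le hbound (by rw [hv, mul_one])⟩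
    rintro rfl
    simp [normPowSum] at hv
  have hlam : 0 ≤ (fpoly A v).re := by simpa using (h _ _ heig).1
  exact (mul_nonneg hlam (normPowSum_nonneg _ x)).trans (hbound x)
end
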